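/- arXiv:2307.09392 — 3 statements merged into one kernel-verified Lean document; each statement's English description precedes it below -/
import Mathlib

section
/- For every integer N ≥ 1 and all real parameters Δ > 0, σᵤ > 0, Σ₀ > 0, there exists a unique tuple of real sequences (λₙ, Σₙ, αₙ, βₙ) for n = 1,…,N, with the given initial value Σ₀ and terminal condition α_N = 0, satisfying Kyle's recursion together with the conditions λₙ > 0 and αₙλₙ < 1 for every n = 1,…,N. -/
/-- Kyle's recursion with `N` trading times, parameters `Δ`, `σu`, `Sig0`:
sequences `(l, S, a, b)` (Kyle's `(λ, Σ, α, β)`), with initial value `S 0 = Sig0`,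
terminal condition `a N = 0`, satisfying the four recursion equations together
with `l n > 0` and `a n * l n < 1` for all `n = 1, …, N`. -/
def KyleSolution (N : ℕ) (Δ σu Sig0 : ℝ) (l S a b : ℕ → ℝ) : Prop :=
  S 0 = Sig0 ∧ a N = 0 ∧
  ∀ n, 1 ≤ n → n ≤ N →
    l n = b n * S (n - 1) / ((b n) ^ 2 * S (n - 1) * Δ + σu ^ 2) ∧
    S n = S (n - 1) * σu ^ 2 / ((b n) ^ 2 * S (n - 1) * Δ + σu ^ 2) ∧
    a (n - 1) = 1 / (4 * l n * (1 - a n * l n)) ∧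
    b n = (1 - 2 * a n * l n) / (2 * Δ * l n * (1 - a n * l n)) ∧
    0 < l n ∧ a n * l n < 1

/-!
Write `xₙ = αₙλₙ`. Given `Σₙ₋₁ > 0`, step `n` of the recursion is equivalent to `xₙ < 1/2`,
`Σₙ₋₁ = 2(1 - xₙ)Σₙ`, `2Δσᵤ²λₙ²(1 - xₙ) = Σₙ(1 - 2xₙ)`, `βₙ = λₙσᵤ²/Σₙ` and
`αₙ₋₁ = 1/(4λₙ(1 - xₙ))`. Eliminating `λ` and `Σ` between two consecutive steps leaves the
backward cubic `8xₙ₋₁²(1 - xₙ₋₁)(1 - 2xₙ) = 1 - 2xₙ₋₁`, which for `xₙ < 1/2` has exactly one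
root `xₙ₋₁ ∈ (0, 1/2)` because `y ↦ 8y²(1 - y)(1 - 2xₙ) + 2y` increases strictly on `[0, 1/2]`.
So `x` is forced backwards from `x_N = 0`, then `Σ` forwards from `Σ₀`, `λ` as a positive square
root, and `β`, `α` explicitly; conversely these formulas solve the recursion.
-/

open Set

namespace Kyle

/-- Step `n` of the recursion, for `(S₀, a₀) = (Σₙ₋₁, αₙ₋₁)` and `(l, S, a, b) = (λₙ, Σₙ, αₙ, βₙ)`. -/
def Step (Δ σu S₀ l S a₀ a b : ℝ) : Prop :=
  l = b * S₀ / (b ^ 2 * S₀ * Δ + σu ^ 2) ∧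
  S = S₀ * σu ^ 2 / (b ^ 2 * S₀ * Δ + σu ^ 2) ∧
  a₀ = 1 / (4 * l * (1 - a * l)) ∧
  b = (1 - 2 * a * l) / (2 * Δ * l * (1 - a * l)) ∧
  0 < l ∧ a * l < 1

section Step

variable {Δ σu S₀ l S a₀ a b : ℝ}

theorem step_iff (hΔ : 0 < Δ) (hσ : 0 < σu) (hS₀ : 0 < S₀) :
    Step Δ σu S₀ l S a₀ a b ↔
      0 < l ∧ a * l < 1 / 2 ∧ S₀ = 2 * (1 - a * l) * S ∧
      2 * Δ * σu ^ 2 * l ^ 2 * (1 - a * l) = S * (1 - 2 * (a * l)) ∧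
      b = l * σu ^ 2 / S ∧ a₀ = 1 / (4 * l * (1 - a * l)) := by
  constructor
  · rintro ⟨hl_eq, hS_eq, ha₀, hb_eq, hl, hx⟩
    have hD : 0 < b ^ 2 * S₀ * Δ + σu ^ 2 := by positivity
    have hS : 0 < S := by rw [hS_eq]; positivity
    rw [eq_div_iff hD.ne'] at hl_eq hS_eq
    have hb : 0 < b := pos_of_mul_pos_left (hl_eq ▸ mul_pos hl hD) hS₀.le
    have hden : 0 < 2 * Δ * l * (1 - a * l) := mul_pos (by positivity) (by linarith)
    rw [eq_div_iff hden.ne'] at hb_eq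
    have hbS : b * S = l * σu ^ 2 := by
      apply mul_right_cancel₀ hD.ne'
      linear_combination b * hS_eq - σu ^ 2 * hl_eq
    have hlS : 2 * Δ * σu ^ 2 * l ^ 2 * (1 - a * l) = S * (1 - 2 * (a * l)) := by
      linear_combination (-(2 * Δ * l * (1 - a * l))) * hbS + S * hb_eq
    refine ⟨hl, ?_, ?_, hlS, by rw [eq_div_iff hS.ne', hbS], ha₀⟩
    · nlinarith [mul_pos hb hden]
    · apply mul_right_cancel₀ (mul_pos (by positivity : (0 : ℝ) < σu ^ 2) hS).ne'
      linear_combination (-(2 * (1 - a * l) * S)) * hS_eq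
        + (2 * (1 - a * l) * Δ * S₀ * (b * S + l * σu ^ 2)) * hbS + (σu ^ 2 * S₀) * hlS
  · rintro ⟨hl, hx, hS₀_eq, hlS, hb, ha₀⟩
    set x := a * l with hx_def
    have hx1 : 0 < 1 - x := by linarith
    have hx2 : 0 < 1 - 2 * x := by linarith
    have hS : 0 < S := by nlinarith
    have hS' : S = 2 * Δ * σu ^ 2 * l ^ 2 * (1 - x) / (1 - 2 * x) := by
      rw [eq_div_iff hx2.ne']; linarith
    have hb' : b = (1 - 2 * x) / (2 * Δ * l * (1 - x)) := by
      rw [hb, hS']; field_simp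
    refine ⟨?_, ?_, ha₀, by rw [hb', hx_def, mul_assoc 2 a], hl, by linarith⟩
    · rw [hb', hS₀_eq, hS']; field_simp; ring
    · rw [hb', hS₀_eq, hS']; field_simp; ring

end Step

section Cubic

variable {Δ σu S l l' x y : ℝ}

theorem eq_four_mul_iff_cubic (hΔ : 0 < Δ) (hσ : 0 < σu) (hS : 0 < S) (hx : 0 ≤ x) (hx1 : x < 1)
    (hy1 : y < 1) (hl : 0 < l) (hl' : 0 < l')
    (hlx : 2 * Δ * σu ^ 2 * l ^ 2 * (1 - x) = 2 * (1 - y) * S * (1 - 2 * x))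
    (hly : 2 * Δ * σu ^ 2 * l' ^ 2 * (1 - y) = S * (1 - 2 * y)) :
    l = 4 * x * l' * (1 - y) ↔ 8 * x ^ 2 * (1 - x) * (1 - 2 * y) = 1 - 2 * x := by
  have key : 2 * Δ * σu ^ 2 * (1 - x) * (l ^ 2 - (4 * x * l' * (1 - y)) ^ 2)
      = 2 * (1 - y) * S * ((1 - 2 * x) - 8 * x ^ 2 * (1 - x) * (1 - 2 * y)) := by
    linear_combination hlx - 16 * x ^ 2 * (1 - x) * (1 - y) * hly
  have hA : 2 * Δ * σu ^ 2 * (1 - x) ≠ 0 := (mul_pos (by positivity) (by linarith)).ne'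
  have hB : 2 * (1 - y) * S ≠ 0 := (mul_pos (by linarith) hS).ne'
  have hm : 0 ≤ 4 * x * l' * (1 - y) := mul_nonneg (by positivity) (by linarith)
  rw [← sq_eq_sq₀ hl.le hm, ← sub_eq_zero, ← mul_right_inj' hA, key, mul_zero, mul_eq_zero,
    or_iff_right hB, sub_eq_zero, eq_comm]

theorem cubic_strictMonoOn {c : ℝ} (hc : 0 ≤ c) :
    StrictMonoOn (fun y : ℝ => 8 * y ^ 2 * (1 - y) * c + 2 * y) (Icc 0 (1 / 2)) := by
  intro y hy z hz hyz
  have hyz' : 0 ≤ y * z + (y + z) * (1 - (y + z)) := by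
    have := mul_nonneg (add_nonneg hy.1 hz.1) (by linarith [hy.2, hz.2] : (0 : ℝ) ≤ 1 - (y + z))
    nlinarith [mul_nonneg hy.1 hz.1]
  have hfac : 8 * z ^ 2 * (1 - z) * c + 2 * z - (8 * y ^ 2 * (1 - y) * c + 2 * y)
      = (z - y) * (8 * c * (y * z + (y + z) * (1 - (y + z))) + 2) := by ring
  have : 0 < (z - y) * (8 * c * (y * z + (y + z) * (1 - (y + z))) + 2) :=
    mul_pos (sub_pos.2 hyz) (by positivity)
  dsimp only
  linarith

theorem existsUnique_cubic_root {c : ℝ} (hc : 0 < c) :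
    ∃! y : ℝ, y ∈ Ioo 0 (1 / 2) ∧ 8 * y ^ 2 * (1 - y) * c = 1 - 2 * y := by
  set f := fun y : ℝ => 8 * y ^ 2 * (1 - y) * c + 2 * y
  have hf : StrictMonoOn f (Icc 0 (1 / 2)) := cubic_strictMonoOn hc.le
  obtain ⟨y, hy, hfy⟩ : ∃ y ∈ Icc (0 : ℝ) (1 / 2), f y = 1 :=
    intermediate_value_Icc (by norm_num) (by fun_prop) ⟨by norm_num [f], by norm_num [f]; linarith⟩
  have hy0 : y ≠ 0 := by rintro rfl; norm_num [f] at hfy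
  have hy1 : y ≠ 1 / 2 := by rintro rfl; norm_num [f] at hfy; linarith
  refine ⟨y, ⟨⟨lt_of_le_of_ne hy.1 hy0.symm, lt_of_le_of_ne hy.2 hy1⟩, by linarith⟩, ?_⟩
  rintro z ⟨hz, hfz⟩
  exact hf.injOn (Ioo_subset_Icc_self hz) hy (by simp only [f]; linarith)

/-- The ratio `αₙ₋₁λₙ₋₁` forced by `αₙλₙ = x` (junk value `0` unless `x < 1/2`). -/
noncomputable def prevRatio (x : ℝ) : ℝ :=
  if hx : x < 1 / 2 then (existsUnique_cubic_root (by linarith : (0 : ℝ) < 1 - 2 * x)).choose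
  else 0

theorem prevRatio_spec (hx : x < 1 / 2) :
    prevRatio x ∈ Ioo 0 (1 / 2) ∧
      8 * prevRatio x ^ 2 * (1 - prevRatio x) * (1 - 2 * x) = 1 - 2 * prevRatio x := by
  rw [prevRatio, dif_pos hx]
  exact (existsUnique_cubic_root (by linarith)).choose_spec.1

theorem eq_prevRatio (hx : x < 1 / 2) (hy : y ∈ Ioo 0 (1 / 2))
    (h : 8 * y ^ 2 * (1 - y) * (1 - 2 * x) = 1 - 2 * y) : y = prevRatio x := by
  rw [prevRatio, dif_pos hx]
  exact (existsUnique_cubic_root (by linarith)).choose_spec.2 y ⟨hy, h⟩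

/-- `ratio N n` is `αₙλₙ`. -/
noncomputable def ratio (N n : ℕ) : ℝ :=
  if n < N then prevRatio (ratio N (n + 1)) else 0
termination_by N - n

theorem ratio_self (N : ℕ) : ratio N N = 0 := by
  rw [ratio, if_neg (lt_irrefl N)]

theorem ratio_of_lt {N n : ℕ} (h : n < N) : ratio N n = prevRatio (ratio N (n + 1)) := by
  rw [ratio, if_pos h]

theorem ratio_lt_half (N n : ℕ) : ratio N n < 1 / 2 := by
  rw [ratio]
  split_ifs
  · exact (prevRatio_spec (ratio_lt_half N (n + 1))).1.2
  · norm_num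
termination_by N - n

theorem ratio_nonneg (N n : ℕ) : 0 ≤ ratio N n := by
  rw [ratio]
  split_ifs
  · exact (prevRatio_spec (ratio_lt_half N (n + 1))).1.1.le
  · rfl

end Cubic

section Canonical

variable (N : ℕ) (Δ σu Sig0 : ℝ)

noncomputable def sigmaSeq : ℕ → ℝ
  | 0 => Sig0
  | n + 1 => sigmaSeq n / (2 * (1 - ratio N (n + 1)))

noncomputable def lambdaSeq (n : ℕ) : ℝ :=
  √(sigmaSeq N Sig0 n * (1 - 2 * ratio N n) / (2 * Δ * σu ^ 2 * (1 - ratio N n)))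

noncomputable def betaSeq (n : ℕ) : ℝ := lambdaSeq N Δ σu Sig0 n * σu ^ 2 / sigmaSeq N Sig0 n

noncomputable def alphaSeq (n : ℕ) : ℝ :=
  if n < N then 1 / (4 * lambdaSeq N Δ σu Sig0 (n + 1) * (1 - ratio N (n + 1))) else 0

variable {N Δ σu Sig0}

theorem sigmaSeq_eq_succ (n : ℕ) :
    sigmaSeq N Sig0 n = 2 * (1 - ratio N (n + 1)) * sigmaSeq N Sig0 (n + 1) := by
  have : 2 * (1 - ratio N (n + 1)) ≠ 0 := by linarith [ratio_lt_half N (n + 1)]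
  rw [sigmaSeq, mul_div_cancel₀ _ this]

theorem sigmaSeq_pos (hSig : 0 < Sig0) : ∀ n, 0 < sigmaSeq N Sig0 n
  | 0 => hSig
  | n + 1 => div_pos (sigmaSeq_pos hSig n) (by linarith [ratio_lt_half N (n + 1)])

variable (hΔ : 0 < Δ) (hσ : 0 < σu) (hSig : 0 < Sig0)
include hΔ hσ hSig

theorem lambdaSeq_pos_and_sq (n : ℕ) :
    0 < lambdaSeq N Δ σu Sig0 n ∧
      2 * Δ * σu ^ 2 * lambdaSeq N Δ σu Sig0 n ^ 2 * (1 - ratio N n)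
        = sigmaSeq N Sig0 n * (1 - 2 * ratio N n) := by
  have hx := ratio_lt_half N n
  have hA : 0 < 2 * Δ * σu ^ 2 * (1 - ratio N n) := mul_pos (by positivity) (by linarith)
  have hB : 0 < sigmaSeq N Sig0 n * (1 - 2 * ratio N n) :=
    mul_pos (sigmaSeq_pos hSig n) (by linarith)
  refine ⟨Real.sqrt_pos.2 (div_pos hB hA), ?_⟩
  rw [lambdaSeq, Real.sq_sqrt (div_pos hB hA).le, mul_right_comm, mul_div_cancel₀ _ hA.ne']

theorem alphaSeq_mul_lambdaSeq {n : ℕ} (hn : n ≤ N) :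
    alphaSeq N Δ σu Sig0 n * lambdaSeq N Δ σu Sig0 n = ratio N n := by
  obtain hn | rfl := hn.lt_or_eq
  · obtain ⟨hl, hlx⟩ := lambdaSeq_pos_and_sq hΔ hσ hSig n
    obtain ⟨hl', hly⟩ := lambdaSeq_pos_and_sq hΔ hσ hSig (n + 1) (N := N)
    have hy := ratio_lt_half N (n + 1)
    rw [sigmaSeq_eq_succ] at hlx
    have hcubic := (prevRatio_spec hy).2
    rw [← ratio_of_lt hn] at hcubic
    have hlink := (eq_four_mul_iff_cubic hΔ hσ (sigmaSeq_pos hSig (n + 1)) (ratio_nonneg N n)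
      (by linarith [ratio_lt_half N n]) (by linarith) hl hl' hlx hly).2 hcubic
    have hy1 : 1 - ratio N (n + 1) ≠ 0 := by linarith
    rw [alphaSeq, if_pos hn, hlink]
    field_simp
  · rw [alphaSeq, if_neg (lt_irrefl _), zero_mul, ratio_self]

theorem isSolution :
    KyleSolution N Δ σu Sig0 (lambdaSeq N Δ σu Sig0) (sigmaSeq N Sig0) (alphaSeq N Δ σu Sig0)
      (betaSeq N Δ σu Sig0) := by
  refine ⟨rfl, by rw [alphaSeq, if_neg (lt_irrefl N)], fun n hn1 hnN => ?_⟩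
  obtain ⟨m, rfl⟩ := Nat.exists_eq_add_of_le' hn1
  rw [Nat.add_sub_cancel]
  refine (step_iff hΔ hσ (sigmaSeq_pos hSig m)).2 ?_
  rw [alphaSeq_mul_lambdaSeq hΔ hσ hSig hnN]
  obtain ⟨hl, hlS⟩ := lambdaSeq_pos_and_sq hΔ hσ hSig (m + 1) (N := N)
  exact ⟨hl, ratio_lt_half N (m + 1), sigmaSeq_eq_succ m, hlS, rfl,
    by rw [alphaSeq, if_pos (by omega)]⟩

end Canonical

end Kyle

namespace KyleSolution

open Kyle

variable {N : ℕ} {Δ σu Sig0 : ℝ} {l S a b : ℕ → ℝ}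

theorem step_succ (h : KyleSolution N Δ σu Sig0 l S a b) {m : ℕ} (hm : m + 1 ≤ N) :
    Step Δ σu (S m) (l (m + 1)) (S (m + 1)) (a m) (a (m + 1)) (b (m + 1)) :=
  h.2.2 (m + 1) (Nat.le_add_left 1 m) hm

variable (h : KyleSolution N Δ σu Sig0 l S a b) (hΔ : 0 < Δ) (hσ : 0 < σu) (hSig : 0 < Sig0)
include h hΔ hσ hSig

theorem sigma_pos {n : ℕ} (hn : n ≤ N) : 0 < S n := by
  induction n with
  | zero => exact h.1 ▸ hSig
  | succ m ih =>
    have hSm := ih (by omega)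
    obtain ⟨-, hx, hS, -⟩ := (step_iff hΔ hσ hSm).1 (h.step_succ hn)
    exact pos_of_mul_pos_right (hS ▸ hSm) (by linarith)

theorem reduced_step_succ {m : ℕ} (hm : m + 1 ≤ N) :
    0 < l (m + 1) ∧ a (m + 1) * l (m + 1) < 1 / 2 ∧
      S m = 2 * (1 - a (m + 1) * l (m + 1)) * S (m + 1) ∧
      2 * Δ * σu ^ 2 * l (m + 1) ^ 2 * (1 - a (m + 1) * l (m + 1))
        = S (m + 1) * (1 - 2 * (a (m + 1) * l (m + 1))) ∧
      b (m + 1) = l (m + 1) * σu ^ 2 / S (m + 1) ∧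
      a m = 1 / (4 * l (m + 1) * (1 - a (m + 1) * l (m + 1))) :=
  (step_iff hΔ hσ (h.sigma_pos hΔ hσ hSig (by omega))).1 (h.step_succ hm)

theorem mul_eq_ratio {m : ℕ} (hm : m + 1 ≤ N) : a (m + 1) * l (m + 1) = ratio N (m + 1) := by
  obtain hm | hm := hm.lt_or_eq
  · obtain ⟨hl, hx, -, hlx, -⟩ := h.reduced_step_succ hΔ hσ hSig hm.le
    obtain ⟨hl', hy, hS, hly, -, ha⟩ := h.reduced_step_succ hΔ hσ hSig hm
    rw [mul_eq_ratio (m := m + 1) hm] at hy hS hly ha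
    rw [hS] at hlx
    have hy1 : 1 - ratio N (m + 2) ≠ 0 := by linarith
    have hx0 : 0 < a (m + 1) * l (m + 1) :=
      mul_pos (ha ▸ one_div_pos.2 (mul_pos (by positivity) (by linarith))) hl
    have hlink : l (m + 1) = 4 * (a (m + 1) * l (m + 1)) * l (m + 2) * (1 - ratio N (m + 2)) := by
      rw [ha]; field_simp
    have hcubic := (eq_four_mul_iff_cubic hΔ hσ (h.sigma_pos hΔ hσ hSig hm) hx0.le (by linarith)
      (by linarith) hl hl' hlx hly).1 hlink
    rw [ratio_of_lt (by omega)]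
    exact eq_prevRatio hy ⟨hx0, hx⟩ hcubic
  · rw [hm, h.2.1, zero_mul, ratio_self]
termination_by N - m

theorem sigma_eq {n : ℕ} (hn : n ≤ N) : S n = sigmaSeq N Sig0 n := by
  induction n with
  | zero => exact h.1
  | succ m ih =>
    obtain ⟨-, -, hS, -⟩ := h.reduced_step_succ hΔ hσ hSig hn
    rw [h.mul_eq_ratio hΔ hσ hSig hn, ih (by omega), sigmaSeq_eq_succ] at hS
    exact (mul_left_cancel₀ (by linarith [ratio_lt_half N (m + 1)]) hS).symm

theorem lambda_eq {m : ℕ} (hm : m + 1 ≤ N) : l (m + 1) = lambdaSeq N Δ σu Sig0 (m + 1) := by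
  obtain ⟨hl, -, -, hlS, -⟩ := h.reduced_step_succ hΔ hσ hSig hm
  obtain ⟨hl', hlS'⟩ := lambdaSeq_pos_and_sq hΔ hσ hSig (m + 1) (N := N)
  rw [h.mul_eq_ratio hΔ hσ hSig hm, h.sigma_eq hΔ hσ hSig hm] at hlS
  have hA : 2 * Δ * σu ^ 2 * (1 - ratio N (m + 1)) ≠ 0 := by
    have := ratio_lt_half N (m + 1)
    exact (mul_pos (by positivity) (by linarith)).ne'
  refine (sq_eq_sq₀ hl.le hl'.le).1 (mul_left_cancel₀ hA ?_)
  linear_combination hlS - hlS'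

theorem eq_canonical :
    (∀ n, n ≤ N → S n = sigmaSeq N Sig0 n ∧ a n = alphaSeq N Δ σu Sig0 n) ∧
    (∀ n, 1 ≤ n → n ≤ N → l n = lambdaSeq N Δ σu Sig0 n ∧ b n = betaSeq N Δ σu Sig0 n) := by
  refine ⟨fun n hn => ⟨h.sigma_eq hΔ hσ hSig hn, ?_⟩, fun n hn1 hnN => ?_⟩
  · obtain hn | rfl := hn.lt_or_eq
    · obtain ⟨-, -, -, -, -, ha⟩ := h.reduced_step_succ hΔ hσ hSig hn
      rw [ha, h.mul_eq_ratio hΔ hσ hSig hn, h.lambda_eq hΔ hσ hSig hn, alphaSeq, if_pos hn]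
    · rw [h.2.1, alphaSeq, if_neg (lt_irrefl _)]
  · obtain ⟨m, rfl⟩ := Nat.exists_eq_add_of_le' hn1
    obtain ⟨-, -, -, -, hb, -⟩ := h.reduced_step_succ hΔ hσ hSig hnN
    have hl := h.lambda_eq hΔ hσ hSig hnN
    rw [hb, hl, h.sigma_eq hΔ hσ hSig hnN]
    exact ⟨rfl, rfl⟩

end KyleSolution

theorem kyle_recursion_exists_unique_general (N : ℕ) (Δ σu Sig0 : ℝ)
    (hΔ : 0 < Δ) (hσ : 0 < σu) (hSig : 0 < Sig0) :
    (∃ l S a b : ℕ → ℝ, KyleSolution N Δ σu Sig0 l S a b) ∧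
    (∀ l S a b l' S' a' b' : ℕ → ℝ,
      KyleSolution N Δ σu Sig0 l S a b → KyleSolution N Δ σu Sig0 l' S' a' b' →
      (∀ n, n ≤ N → S n = S' n ∧ a n = a' n) ∧
      (∀ n, 1 ≤ n → n ≤ N → l n = l' n ∧ b n = b' n)) := by
  refine ⟨⟨_, _, _, _, Kyle.isSolution hΔ hσ hSig⟩, fun l S a b l' S' a' b' h h' => ?_⟩
  obtain ⟨hSa, hlb⟩ := h.eq_canonical hΔ hσ hSig
  obtain ⟨hSa', hlb'⟩ := h'.eq_canonical hΔ hσ hSig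
  refine ⟨fun n hn => ?_, fun n hn1 hnN => ?_⟩
  · rw [(hSa n hn).1, (hSa n hn).2, (hSa' n hn).1, (hSa' n hn).2]
    exact ⟨rfl, rfl⟩
  · rw [(hlb n hn1 hnN).1, (hlb n hn1 hnN).2, (hlb' n hn1 hnN).1, (hlb' n hn1 hnN).2]
    exact ⟨rfl, rfl⟩

/-- For every `N ≥ 1` and all parameters `Δ > 0`, `σu > 0`, `Sig0 > 0` there is a unique
solution of Kyle's recursion satisfying `λₙ > 0` and `αₙ λₙ < 1` for `n = 1, …, N`
(uniqueness of the values `λₙ, βₙ` for `n = 1, …, N` and `Σₙ, αₙ` for `n = 0, …, N`). -/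
theorem kyle_recursion_exists_unique (N : ℕ) (hN : 1 ≤ N) (Δ σu Sig0 : ℝ)
    (hΔ : 0 < Δ) (hσ : 0 < σu) (hSig : 0 < Sig0) :
    (∃ l S a b : ℕ → ℝ, KyleSolution N Δ σu Sig0 l S a b) ∧
    (∀ l S a b l' S' a' b' : ℕ → ℝ,
      KyleSolution N Δ σu Sig0 l S a b → KyleSolution N Δ σu Sig0 l' S' a' b' →
      (∀ n, n ≤ N → S n = S' n ∧ a n = a' n) ∧
      (∀ n, 1 ≤ n → n ≤ N → l n = l' n ∧ b n = b' n)) :=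
  kyle_recursion_exists_unique_general N Δ σu Sig0 hΔ hσ hSig
end

section
/- For every integer N ≥ 1 there exists a unique finite sequence (b₁,…,b_N) of real numbers with b_N = 1, bₙ ∈ (0,1) for every n < N, and bₙ² = b_{n−1}²/((1 − b_{n−1}²)²(1 + b_{n−1}²)) for every n = 2,…,N. -/
/-- The finite sequence `(b 1, …, b N)` satisfies the backward recursion:
`b N = 1`, `b n ∈ (0,1)` for `1 ≤ n < N`, and
`bₙ² = b_{n-1}² / ((1 - b_{n-1}²)² (1 + b_{n-1}²))` for `n = 2, …, N`. -/
def KyleBSeq (N : ℕ) (b : ℕ → ℝ) : Prop :=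
  b N = 1 ∧
  (∀ n, 1 ≤ n → n < N → b n ∈ Set.Ioo (0 : ℝ) 1) ∧
  (∀ n, 2 ≤ n → n ≤ N →
    (b n) ^ 2 = (b (n - 1)) ^ 2 / ((1 - (b (n - 1)) ^ 2) ^ 2 * (1 + (b (n - 1)) ^ 2)))

/-!
Writing `x = bₙ₋₁²`, the recursion reads `bₙ² = φ x` with `φ x = x / ((1 - x)² (1 + x))`
(`kyleMap`). On `[0, 1)` the map `φ` is strictly increasing (numerator increasing, denominator
`(1 - x)(1 - x²)` positive and decreasing) and it takes every positive value, since
`x - y (1 - x)² (1 + x)` changes sign on `[0, 1]`. Hence the squares are obtained one after the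
other from `b_N² = 1` by applying `φ⁻¹`, which gives existence, and injectivity of `φ` gives
uniqueness by backward induction from `n = N`.
-/

open Set Function

noncomputable section

def kyleMap (x : ℝ) : ℝ := x / ((1 - x) ^ 2 * (1 + x))

lemma kyleMap_strictMonoOn : StrictMonoOn kyleMap (Ico 0 1) := by
  rintro x ⟨hx0, hx1⟩ y ⟨-, hy1⟩ hxy
  have hgy : 0 < (1 - y) ^ 2 * (1 + y) := mul_pos (pow_pos (sub_pos.2 hy1) 2) (by linarith)
  have hgyx : (1 - y) ^ 2 * (1 + y) < (1 - x) ^ 2 * (1 + x) := by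
    nlinarith [mul_pos (sub_pos.2 hxy) (sub_pos.2 hy1), mul_nonneg hx0 (sub_pos.2 hxy).le,
      mul_pos (mul_pos (sub_pos.2 hxy) (sub_pos.2 hy1)) (sub_pos.2 hy1)]
  calc kyleMap x ≤ x / ((1 - y) ^ 2 * (1 + y)) := div_le_div_of_nonneg_left hx0 hgy hgyx.le
    _ < kyleMap y := div_lt_div_of_pos_right hxy hgy

lemma exists_kyleMap_eq {y : ℝ} (hy : 0 < y) : ∃ x ∈ Ioo 0 1, kyleMap x = y := by
  let p : ℝ → ℝ := fun x => x - y * ((1 - x) ^ 2 * (1 + x))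
  have hp : ContinuousOn p (Icc 0 1) := by fun_prop
  obtain ⟨x, ⟨hx0, hx1⟩, hpx⟩ :=
    intermediate_value_Ioo zero_le_one hp (show (0 : ℝ) ∈ Ioo (p 0) (p 1) by simp [p, hy])
  have hg : 0 < (1 - x) ^ 2 * (1 + x) := mul_pos (pow_pos (sub_pos.2 hx1) 2) (by linarith)
  refine ⟨x, ⟨hx0, hx1⟩, ?_⟩
  rw [kyleMap, div_eq_iff hg.ne']
  linarith [hpx]

def kyleMapInv (y : ℝ) : ℝ := invFunOn kyleMap (Ioo 0 1) y

lemma kyleMapInv_mem {y : ℝ} (hy : 0 < y) : kyleMapInv y ∈ Ioo 0 1 :=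
  invFunOn_mem (exists_kyleMap_eq hy)

lemma kyleMap_kyleMapInv {y : ℝ} (hy : 0 < y) : kyleMap (kyleMapInv y) = y :=
  invFunOn_eq (exists_kyleMap_eq hy)

/-- `kyleSq k` is the value of `b_{N-k}²`, independently of `N`. -/
def kyleSq (k : ℕ) : ℝ := kyleMapInv^[k] 1

lemma kyleSq_succ (k : ℕ) : kyleSq (k + 1) = kyleMapInv (kyleSq k) :=
  iterate_succ_apply' _ _ _

lemma kyleSq_pos (k : ℕ) : 0 < kyleSq k := by
  induction k with
  | zero => exact one_pos
  | succ k ih => exact kyleSq_succ k ▸ (kyleMapInv_mem ih).1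

lemma kyleSq_succ_lt_one (k : ℕ) : kyleSq (k + 1) < 1 :=
  kyleSq_succ k ▸ (kyleMapInv_mem (kyleSq_pos k)).2

lemma kyleMap_kyleSq_succ (k : ℕ) : kyleMap (kyleSq (k + 1)) = kyleSq k := by
  rw [kyleSq_succ, kyleMap_kyleMapInv (kyleSq_pos k)]

lemma kyleBSeq_sqrt_kyleSq (N : ℕ) : KyleBSeq N fun n => √(kyleSq (N - n)) := by
  have hsq (n : ℕ) : √(kyleSq (N - n)) ^ 2 = kyleSq (N - n) := Real.sq_sqrt (kyleSq_pos _).le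
  refine ⟨by simp [kyleSq], fun n _ hnN => ⟨Real.sqrt_pos.2 (kyleSq_pos _), ?_⟩, fun n _ hnN => ?_⟩
  · obtain ⟨k, hk⟩ : ∃ k, N - n = k + 1 := ⟨N - n - 1, by omega⟩
    rw [Real.sqrt_lt' one_pos, hk, one_pow]
    exact kyleSq_succ_lt_one k
  · rw [hsq, hsq, show N - (n - 1) = N - n + 1 by omega]
    exact (kyleMap_kyleSq_succ _).symm

lemma KyleBSeq.unique {N : ℕ} {b b' : ℕ → ℝ} (hb : KyleBSeq N b) (hb' : KyleBSeq N b')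
    {n : ℕ} (hn : 1 ≤ n) (hnN : n ≤ N) : b n = b' n := by
  induction hnN using Nat.decreasingInduction with
  | self => rw [hb.1, hb'.1]
  | of_succ k hkN ih =>
    have hmem := hb.2.1 k hn hkN
    have hmem' := hb'.2.1 k hn hkN
    have hsq (c : ℝ) (hc : c ∈ Ioo 0 1) : c ^ 2 ∈ Ico 0 1 :=
      ⟨sq_nonneg c, by nlinarith [hc.1, hc.2]⟩
    -- the recursion at `k + 1` is literally `b (k + 1) ^ 2 = kyleMap (b k ^ 2)`
    have hmap : kyleMap (b k ^ 2) = kyleMap (b' k ^ 2) := by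
      have h := hb.2.2 (k + 1) (by omega) hkN
      have h' := hb'.2.2 (k + 1) (by omega) hkN
      simp only [Nat.add_sub_cancel] at h h'
      rw [kyleMap, kyleMap, ← h, ← h', ih (by omega)]
    have hsq_eq := kyleMap_strictMonoOn.injOn (hsq _ hmem) (hsq _ hmem') hmap
    exact (pow_left_inj₀ hmem.1.le hmem'.1.le two_ne_zero).1 hsq_eq

end

theorem kyle_bseq_exists_unique_general (N : ℕ) :
    ∃ b : ℕ → ℝ, KyleBSeq N b ∧
      ∀ b' : ℕ → ℝ, KyleBSeq N b' → ∀ n, 1 ≤ n → n ≤ N → b' n = b n :=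
  ⟨_, kyleBSeq_sqrt_kyleSq N, fun _ hb' _ hn hnN =>
    hb'.unique (kyleBSeq_sqrt_kyleSq N) hn hnN⟩

/-- For every `N ≥ 1` there exists a unique finite sequence `(b 1, …, b N)` with
`b N = 1`, `b n ∈ (0,1)` for `n < N`, and
`bₙ² = b_{n-1}²/((1 − b_{n-1}²)²(1 + b_{n-1}²))` for `n = 2, …, N`. -/
theorem kyle_bseq_exists_unique (N : ℕ) (hN : 1 ≤ N) :
    ∃ b : ℕ → ℝ, KyleBSeq N b ∧
      ∀ b' : ℕ → ℝ, KyleBSeq N b' → ∀ n, 1 ≤ n → n ≤ N → b' n = b n :=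
  kyle_bseq_exists_unique_general N
end

section
/- Let (λ̂ₙ, Σ̂ₙ, α̂ₙ, β̂ₙ), n = 1,…,N, be the unique solution of Kyle's recursion with α̂_N = 0, λ̂ₙ > 0 and α̂ₙλ̂ₙ < 1 for all n, and let (b̂₁,…,b̂_N) be the unique sequence with b̂_N = 1, b̂ₙ ∈ (0,1) for n < N and b̂ₙ² = b̂_{n−1}²/((1 − b̂_{n−1}²)²(1 + b̂_{n−1}²)) for n = 2,…,N. Then for every n = 1,…,N one has β̂ₙ = b̂ₙσᵤ/√(Σ̂_{n−1}Δ) and Σ̂ₙ = Σ̂_{n−1}/(1 + b̂ₙ²). -/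
lemma kyle_key_inj {s t u : ℝ} (hs0 : 0 ≤ s) (hs1 : s < 1) (ht0 : 0 ≤ t) (ht1 : t < 1)
    (hs : s = (1-s)^2*(1+s)*u) (ht : t = (1-t)^2*(1+t)*u) : s = t := by
  have key : s*((1-t)^2*(1+t)) = t*((1-s)^2*(1+s)) := by
    linear_combination ((1-t)^2*(1+t))*hs - ((1-s)^2*(1+s))*ht
  have hfac : (s - t)*(1 + s*t*(1-s-t)) = 0 := by linear_combination key
  have hpos : 0 < 1 + s*t*(1-s-t) := by nlinarith [mul_nonneg hs0 ht0, mul_pos (sub_pos.2 hs1) (sub_pos.2 ht1)]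
  rcases mul_eq_zero.1 hfac with h | h
  · linarith
  · linarith


set_option maxHeartbeats 2000000 in
/-- If `(λ̂, Σ̂, α̂, β̂)` is the solution of Kyle's recursion (with `α̂_N = 0`, `λ̂ₙ > 0`,
`α̂ₙλ̂ₙ < 1`) and `(b̂ₙ)` is the unique autonomous sequence, then for every `n = 1, …, N`
one has `β̂ₙ = b̂ₙ σu / √(Σ̂_{n-1} Δ)` and `Σ̂ₙ = Σ̂_{n-1}/(1 + b̂ₙ²)`. -/
theorem kyle_equilibrium_autonomous_representation
    (N : ℕ) (hN : 1 ≤ N) (Δ σu Sig0 : ℝ) (hΔ : 0 < Δ) (hσ : 0 < σu) (hSig : 0 < Sig0)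
    (l S a beta : ℕ → ℝ) (hsol : KyleSolution N Δ σu Sig0 l S a beta)
    (b : ℕ → ℝ) (hb : KyleBSeq N b) :
    ∀ n, 1 ≤ n → n ≤ N →
      beta n = b n * σu / Real.sqrt (S (n - 1) * Δ) ∧
      S n = S (n - 1) / (1 + (b n) ^ 2) := by
  obtain ⟨hS0, haN, hrec⟩ := hsol
  obtain ⟨hbN, hbIoo, hbrec⟩ := hb
  have hσ2 : (0:ℝ) < σu^2 := by positivity
  -- positivity of S
  have hSpos : ∀ n, n ≤ N → 0 < S n := by
    intro n
    induction n with
    | zero => intro _; rw [hS0]; exact hSig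
    | succ m ih =>
      intro hm
      have hmS : 0 < S m := ih (by omega)
      obtain ⟨_, hSeq, _, _, _, _⟩ := hrec (m+1) (by omega) hm
      simp only [Nat.add_sub_cancel] at hSeq
      rw [hSeq]; positivity
  -- per-step facts: positivity of beta and the key identity β²ΣΔ = (1-2x)σu²
  have facts : ∀ n, 1 ≤ n → n ≤ N →
      0 < beta n ∧ beta n ^ 2 * S (n-1) * Δ = (1 - 2*(a n * l n)) * σu^2 := by
    intro n h1 h2
    obtain ⟨hl, hS, ha, hβ, hlpos, hx⟩ := hrec n h1 h2
    have hSg : 0 < S (n-1) := hSpos (n-1) (by omega)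
    have hD : 0 < beta n^2 * S (n-1) * Δ + σu^2 := by positivity
    rw [eq_div_iff hD.ne'] at hl
    have hx' : 0 < 1 - a n * l n := by linarith
    have hd2 : (2*Δ*l n*(1 - a n * l n)) ≠ 0 := by positivity
    rw [eq_div_iff hd2] at hβ
    have E : beta n ^2 * S (n-1) * Δ = (1 - 2*(a n * l n)) * σu^2 := by
      linear_combination (beta n^2*S (n-1)*Δ + σu^2) * hβ - 2*Δ*beta n*(1 - a n * l n) * hl
    have hβpos : 0 < beta n := by
      have hlp : 0 < l n * (beta n^2*S (n-1)*Δ + σu^2) := mul_pos hlpos hD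
      rw [hl] at hlp
      nlinarith only [hlp, hSg]
    exact ⟨hβpos, E⟩
  have hbpos : ∀ n, 1 ≤ n → n ≤ N → 0 < b n := by
    intro n h1 h2
    rcases eq_or_lt_of_le h2 with h | h
    · rw [h, hbN]; norm_num
    · exact (hbIoo n h1 h).1
  -- main backward induction
  have main : ∀ k n, n + k = N → 1 ≤ n →
      beta n ^ 2 * S (n-1) * Δ = (b n)^2 * σu^2 := by
    intro k
    induction k with
    | zero =>
      intro n hn h1
      have hnN : n = N := by omega
      subst hnN
      obtain ⟨_, E⟩ := facts n h1 le_rfl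
      rw [haN] at E
      rw [hbN, E]; ring
    | succ k ih =>
      intro n hn h1
      have hnN : n < N := by omega
      have ihm := ih (n+1) (by omega) (by omega)
      obtain ⟨hβn, En⟩ := facts n h1 (by omega)
      obtain ⟨hβm, Em'⟩ := facts (n+1) (by omega) (by omega)
      obtain ⟨hln, hSn, _, _, hlposn, hxn⟩ := hrec n h1 (by omega)
      obtain ⟨hlm, _, ham, _, hlposm, hxm⟩ := hrec (n+1) (by omega) (by omega)
      simp only [Nat.add_sub_cancel] at hlm ham ihm Em'
      have Em := Em'
      have hSg : 0 < S (n-1) := hSpos (n-1) (by omega)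
      have hSgn : 0 < S n := hSpos n (by omega)
      have hxm' : 0 < 1 - a (n+1) * l (n+1) := by linarith
      have hDn : 0 < beta n^2*S (n-1)*Δ + σu^2 := by positivity
      have hDm : 0 < beta (n+1)^2*S n*Δ + σu^2 := by positivity
      rw [eq_div_iff hDn.ne'] at hln hSn
      rw [eq_div_iff hDm.ne'] at hlm
      have hapos : 0 < a n := by rw [ham]; positivity
      have hd4 : (4*l (n+1)*(1 - a (n+1)*l (n+1))) ≠ 0 := by positivity
      rw [eq_div_iff hd4] at ham
      have hxnpos : 0 < a n * l n := mul_pos hapos hlposn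
      -- s := 1 - 2*(a n * l n) is positive
      have hspos : 0 < 1 - 2*(a n * l n) := by
        have h5 : 0 < (1 - 2*(a n * l n)) * σu^2 := by rw [← En]; positivity
        nlinarith only [h5, hσ2]
      -- chain relations
      have hchain1 : 4 * (a n * l n) * (l (n+1) * (1 - a (n+1)*l (n+1))) = l n := by
        linear_combination (l n)*ham
      have hSc' : (S n * (1 + (1 - 2*(a n * l n)))) * σu^2 = S (n-1) * σu^2 := by
        linear_combination hSn - S n * En
      have hSc : S n * (1 + (1 - 2*(a n * l n))) = S (n-1) :=
        mul_right_cancel₀ hσ2.ne' hSc'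
      have hlnE : l n * (1 + (1 - 2*(a n * l n))) * σu^2 = beta n * S (n-1) := by
        linear_combination hln - (l n)*En
      have hlmE : l (n+1) * (1 + (1 - 2*(a (n+1) * l (n+1)))) * σu^2 = beta (n+1) * S n := by
        linear_combination hlm - (l (n+1))*Em
      have hkey : ((1 - (1 - 2*(a n * l n))) * beta (n+1)) * ((1 + (1 - 2*(a n * l n))) * S n)
          = beta n * ((1 + (1 - 2*(a n * l n))) * S n) := by
        linear_combination (-((1 - (1 - 2*(a n * l n)))*(1 + (1 - 2*(a n * l n)))))*hlmE
          + (1 + (1 - 2*(a n * l n)))*σu^2*hchain1 + hlnE - beta n * hSc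
      have hne : ((1 + (1 - 2*(a n * l n))) * S n) ≠ 0 := by positivity
      have hβrel : (1 - (1 - 2*(a n * l n))) * beta (n+1) = beta n :=
        mul_right_cancel₀ hne hkey
      have hsq : (1 - (1 - 2*(a n * l n)))^2 * beta (n+1)^2 = beta n^2 := by
        linear_combination ((1 - (1 - 2*(a n * l n)))*beta (n+1) + beta n)*hβrel
      have hT : (1 - 2*(a (n+1) * l (n+1))) * σu^2 = (b (n+1))^2 * σu^2 := by
        linear_combination ihm - Em
      -- final: s σu² = (1-s)²(1+s) b_{n+1}² σu²
      have hfinal : (1 - 2*(a n * l n)) * σu^2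
          = ((1 - (1 - 2*(a n * l n)))^2 * (1 + (1 - 2*(a n * l n))) * (b (n+1))^2) * σu^2 := by
        linear_combination (-1)*En - (S (n-1)*Δ)*hsq
          - ((1 - (1 - 2*(a n * l n)))^2*beta (n+1)^2*Δ)*hSc
          + ((1 - (1 - 2*(a n * l n)))^2*(1 + (1 - 2*(a n * l n))))*Em
          + ((1 - (1 - 2*(a n * l n)))^2*(1 + (1 - 2*(a n * l n))))*hT
      have hfin2 : (1 - 2*(a n * l n))
          = (1 - (1 - 2*(a n * l n)))^2 * (1 + (1 - 2*(a n * l n))) * (b (n+1))^2 :=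
        mul_right_cancel₀ hσ2.ne' hfinal
      -- b recursion at n+1
      have hbio := hbIoo n h1 hnN
      have hbn0 : 0 < b n := hbio.1
      have hbn1 : b n < 1 := hbio.2
      have hbd : ((1 - (b n)^2)^2 * (1 + (b n)^2)) ≠ 0 := by
        have : 0 < 1 - (b n)^2 := by nlinarith only [hbn0, hbn1]
        positivity
      have hbr := hbrec (n+1) (by omega) (by omega)
      simp only [Nat.add_sub_cancel] at hbr
      rw [eq_div_iff hbd] at hbr
      have hbn2 : (b n)^2 = (1 - (b n)^2)^2 * (1 + (b n)^2) * (b (n+1))^2 := by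
        linear_combination -hbr
      -- apply injectivity
      have hseq : (1 - 2*(a n * l n)) = (b n)^2 := by
        apply kyle_key_inj (u := (b (n+1))^2) hspos.le
          (by nlinarith only [hxnpos]) (by positivity)
          (by nlinarith only [hbn0, hbn1]) hfin2 hbn2
      linear_combination En + σu^2 * hseq
  -- conclude
  intro n h1 h2
  have Em := main (N - n) n (by omega) h1
  obtain ⟨hβpos, _⟩ := facts n h1 h2
  obtain ⟨hl, hS, _, _, _, _⟩ := hrec n h1 h2
  have hSg : 0 < S (n-1) := hSpos (n-1) (by omega)
  have hSΔ : 0 < S (n-1) * Δ := mul_pos hSg hΔ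
  have hbn : 0 < b n := hbpos n h1 h2
  constructor
  · have h2' : beta n ^2 = (b n * σu / Real.sqrt (S (n-1)*Δ))^2 := by
      rw [div_pow, mul_pow, Real.sq_sqrt hSΔ.le, eq_div_iff hSΔ.ne']
      linear_combination Em
    calc beta n = Real.sqrt (beta n^2) := (Real.sqrt_sq hβpos.le).symm
      _ = Real.sqrt ((b n * σu / Real.sqrt (S (n-1)*Δ))^2) := by rw [h2']
      _ = b n * σu / Real.sqrt (S (n-1)*Δ) := Real.sqrt_sq (by positivity)
  · have hDn : 0 < beta n^2*S (n-1)*Δ + σu^2 := by positivity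
    rw [eq_div_iff hDn.ne'] at hS
    have hne : (1 + (b n)^2) ≠ 0 := by positivity
    rw [eq_div_iff hne]
    have h3 : (S n * (1 + (b n)^2)) * σu^2 = S (n-1) * σu^2 := by
      linear_combination hS - S n * Em
    exact mul_right_cancel₀ hσ2.ne' h3
end
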